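/- arXiv:1704.04720 — 4 statements merged into one kernel-verified Lean document; each statement's English description precedes it below -/
import Mathlib

section
/- Let a, b > 0 and 0 < c ≤ 1, and let q = (b - (1-c)·a)/(c·(a+b)). Then 0 ≤ q ≤ 1 if and only if both c ≥ (b-a)/b and c ≥ (a-b)/a hold. Consequently, when b > a, q ∈ [0,1] (so that (q,1-q) is a valid mixed strategy and the symmetric mixed profile is a Nash equilibrium) if and only if c ≥ (b-a)/b; and when a > b, q ∈ [0,1] if and only if c ≥ (a-b)/a. -/
/-- The indifference probability q lies in [0,1] iff both c ≥ (b-a)/b and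
c ≥ (a-b)/a hold; consequently the mixed Nash equilibrium exists iff
c ≥ (b-a)/b when b > a, and iff c ≥ (a-b)/a when a > b. -/
theorem mixed_nash_validity
    (a b c : ℝ)
    (ha : 0 < a) (hb : 0 < b)
    (hc0 : 0 < c) (hc1 : c ≤ 1)
    (q : ℝ) (hq : q = (b - (1 - c) * a) / (c * (a + b))) :
    ((0 ≤ q ∧ q ≤ 1) ↔ (c ≥ (b - a) / b ∧ c ≥ (a - b) / a)) ∧
    (b > a → ((0 ≤ q ∧ q ≤ 1) ↔ c ≥ (b - a) / b)) ∧
    (a > b → ((0 ≤ q ∧ q ≤ 1) ↔ c ≥ (a - b) / a)) := by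
  have hden : 0 < c * (a + b) := by positivity
  have h0 : (0 ≤ q) ↔ c ≥ (a - b) / a := by
    rw [hq, le_div_iff₀ hden, ge_iff_le, div_le_iff₀ ha]
    constructor <;> intro h <;> nlinarith
  have h1 : (q ≤ 1) ↔ c ≥ (b - a) / b := by
    rw [hq, div_le_one hden, ge_iff_le, div_le_iff₀ hb]
    constructor <;> intro h <;> nlinarith
  have hmain : (0 ≤ q ∧ q ≤ 1) ↔ (c ≥ (b - a) / b ∧ c ≥ (a - b) / a) := by
    rw [h0, h1]; tauto
  refine ⟨hmain, ?_, ?_⟩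
  · intro hba
    rw [hmain]
    have h2 : (a - b) / a ≤ c := by
      have : (a - b) / a ≤ 0 := div_nonpos_of_nonpos_of_nonneg (by linarith) ha.le
      linarith
    exact ⟨fun h => h.1, fun h => ⟨h, h2⟩⟩
  · intro hab
    rw [hmain]
    have h2 : (b - a) / b ≤ c := by
      have : (b - a) / b ≤ 0 := div_nonpos_of_nonpos_of_nonneg (by linarith) hb.le
      linarith
    exact ⟨fun h => h.2, fun h => ⟨h2, h⟩⟩
end

section
/- Let a, b > 0 with b > a, and suppose c > (b-a)/b with c ≤ 1. For x ∈ [0,1] define u_A(x) = x·a + (1-x)·(1-c)·a and u_B(x) = x·(1-c)·b + (1-x)·b. Then strategy A is evolutionarily stable: there exists δ > 0 such that for every ε with 0 < ε < δ, in a population where fraction ε plays B and fraction 1-ε plays A, the payoff of an A-player strictly exceeds that of a B-player, i.e., u_A(1-ε) > u_B(1-ε). -/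
/-- Theorem 5(i), second part: when b > a and c > (b-a)/b, strategy A is also
evolutionarily stable. -/
theorem A_is_ESS_high_coordination
    (a b c : ℝ)
    (ha : 0 < a) (hb : 0 < b) (hba : b > a)
    (hc : c > (b - a) / b) (hc1 : c ≤ 1)
    (uA uB : ℝ → ℝ)
    (huA : ∀ x, uA x = x * a + (1 - x) * ((1 - c) * a))
    (huB : ∀ x, uB x = x * ((1 - c) * b) + (1 - x) * b) :
    ∃ δ : ℝ, 0 < δ ∧ ∀ ε : ℝ, 0 < ε → ε < δ → uA (1 - ε) > uB (1 - ε) := by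
  have hcb : c * b > b - a := by
    have := (div_lt_iff₀ hb).mp hc
    linarith
  have hc0 : 0 < c := by
    rcases lt_or_ge 0 c with h | h
    · exact h
    · nlinarith
  have hd : 0 < a - (1 - c) * b := by nlinarith
  refine ⟨(a - (1 - c) * b) / (c * (a + b)), by positivity, fun ε hε hεδ => ?_⟩
  rw [huA, huB]
  have h2 : ε * (c * (a + b)) < a - (1 - c) * b :=
    (lt_div_iff₀ (by positivity : (0:ℝ) < c * (a + b))).mp hεδ
  nlinarith
end

section
/- Let a, b > 0 and 0 ≤ c ≤ 1. Then it is impossible that both (1-c)·b > a and (1-c)·a > b hold simultaneously. Consequently, the conditions M'_BA > M'_AA and M'_AB > M'_BB (which are required for the interior mixed strategy (q, 1-q) with q = (b-(1-c)a)/(c(a+b)) to be evolutionarily stable) can never both be satisfied, so the mixed strategy is never an evolutionarily stable strategy. -/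
/-- The interior mixed strategy is never an ESS: the required conditions
(1-c)b > a and (1-c)a > b can never both be satisfied. -/
theorem mixed_never_ESS
    (a b c : ℝ)
    (ha : 0 < a) (hb : 0 < b)
    (hc0 : 0 ≤ c) (hc1 : c ≤ 1) :
    ¬((1 - c) * b > a ∧ (1 - c) * a > b) := by
  rintro ⟨h1, h2⟩
  nlinarith
end

section
/- Let a, b > 0 and let c₁, c₂ satisfy 0 ≤ c₁ < c₂ ≤ 1. For x ∈ [0,1] define h_c(x) = x·(1-x)·(c·(a+b)·x - (a - (1-c)·b)). Then for every x with 0 ≤ x ≤ 1: if x ≤ b/(a+b) then h_{c₂}(x) - h_{c₁}(x) ≤ 0, and if b/(a+b) < x < 1 then h_{c₂}(x) - h_{c₁}(x) > 0. That is, a society with higher need for coordination changes toward norm B more slowly than one with lower need for coordination until the proportion of B-players exceeds b/(a+b). -/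
/-- The paper's `h_c(x)`. -/
def replicatorRate (a b c x : ℝ) : ℝ :=
  x * (1 - x) * (c * (a + b) * x - (a - (1 - c) * b))

theorem replicatorRate_sub (a b c₁ c₂ x : ℝ) :
    replicatorRate a b c₂ x - replicatorRate a b c₁ x =
      x * (1 - x) * (c₂ - c₁) * ((a + b) * x - b) := by
  unfold replicatorRate
  ring

theorem cultural_inertia_general
    (a b c₁ c₂ : ℝ)
    (ha : 0 < a) (hb : 0 < b)
    (hc₁₂ : c₁ < c₂)
    (h : ℝ → ℝ → ℝ)
    (hh : ∀ c x, h c x = x * (1 - x) * (c * (a + b) * x - (a - (1 - c) * b))) :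
    ∀ x : ℝ, 0 ≤ x → x ≤ 1 →
      (x ≤ b / (a + b) → h c₂ x - h c₁ x ≤ 0) ∧
      (b / (a + b) < x → x < 1 → h c₂ x - h c₁ x > 0) := by
  intro x hx0 hx1
  have hab : 0 < a + b := add_pos ha hb
  have hc : 0 < c₂ - c₁ := sub_pos.2 hc₁₂
  have hdiff : h c₂ x - h c₁ x = x * (1 - x) * (c₂ - c₁) * ((a + b) * x - b) := by
    rw [hh, hh]
    exact replicatorRate_sub a b c₁ c₂ x
  rw [hdiff]
  refine ⟨fun hle => ?_, fun hgt hlt => ?_⟩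
  · have hlin : (a + b) * x - b ≤ 0 := by rw [le_div_iff₀ hab] at hle; linarith
    exact mul_nonpos_of_nonneg_of_nonpos
      (mul_nonneg (mul_nonneg hx0 (sub_nonneg.2 hx1)) hc.le) hlin
  · have hlin : 0 < (a + b) * x - b := by rw [div_lt_iff₀ hab] at hgt; linarith
    have hxpos : 0 < x := (div_pos hb hab).trans hgt
    exact mul_pos (mul_pos (mul_pos hxpos (sub_pos.2 hlt)) hc) hlin

/-- A society with higher need for coordination changes toward norm B more
slowly until the proportion of B-players exceeds b/(a+b): for x ∈ [0,1],
h_{c₂}(x) - h_{c₁}(x) ≤ 0 when x ≤ b/(a+b), and > 0 when b/(a+b) < x < 1. -/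
theorem cultural_inertia
    (a b c₁ c₂ : ℝ)
    (ha : 0 < a) (hb : 0 < b)
    (hc₁0 : 0 ≤ c₁) (hc₁₂ : c₁ < c₂) (hc₂1 : c₂ ≤ 1)
    (h : ℝ → ℝ → ℝ)
    (hh : ∀ c x, h c x = x * (1 - x) * (c * (a + b) * x - (a - (1 - c) * b))) :
    ∀ x : ℝ, 0 ≤ x → x ≤ 1 →
      (x ≤ b / (a + b) → h c₂ x - h c₁ x ≤ 0) ∧
      (b / (a + b) < x → x < 1 → h c₂ x - h c₁ x > 0) :=
  cultural_inertia_general a b c₁ c₂ ha hb hc₁₂ h hh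
end
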